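/- arXiv:0906.0989 — 2 statements merged into one kernel-verified Lean document; each statement's English description precedes it below -/
import Mathlib

section
/- Let Φ_a and Φ_b denote the cumulative distribution functions of centered Gaussian random variables with variances a = (1+ε)^{−1} and b = (1−ε)^{−1} respectively. Then there exist constants C > 0 and ε₀ ∈ (0,1) such that for all 0 < ε < ε₀ and all x ∈ ℝ, | Φ_a(x) − Φ_b(x) − ε · x e^{−x²/2}/√(2π) | ≤ C ε³. -/
open MeasureTheory ProbabilityTheory Filter Real Set

/-- Standard normal cumulative distribution function `Φ`. -/
noncomputable def stdGaussCDF (x : ℝ) : ℝ := ((gaussianReal 0 1) (Set.Iic x)).toReal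

/-!
Fix `x` and put `g s = Φ(x √(1 + s))`. The left-hand side is `g ε - g (-ε) - 2 ε g'(0)`: the odd
part of `g` minus its linear term, which three applications of the mean value inequality bound by
`2 ε³ sup |g'''|`. Each derivative of `g` is `x e^{-x²(1+s)/2}` times a polynomial in `x` and
`(1 + s)^{-1/2}`, so for `s ≥ -1/2` the bound `e^{-x²(1+s)/2} ≤ e^{-x²/4}` makes `g'''` bounded
uniformly in `x`.
-/

theorem HasDerivAt.comp_neg {f : ℝ → ℝ} {f' t : ℝ} (h : HasDerivAt f f' (-t)) :
    HasDerivAt (fun s => f (-s)) (-f') t := by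
  simpa [Function.comp_def] using h.comp t (hasDerivAt_neg t)

theorem abs_sub_le_mul_of_hasDerivAt {f f' : ℝ → ℝ} {a b C : ℝ} (hab : a ≤ b)
    (hf : ∀ t ∈ Icc a b, HasDerivAt f (f' t) t) (hC : ∀ t ∈ Icc a b, |f' t| ≤ C) :
    |f b - f a| ≤ C * (b - a) :=
  norm_image_sub_le_of_norm_deriv_le_segment' (fun t ht => (hf t ht).hasDerivWithinAt)
    (fun t ht => hC t (Ico_subset_Icc_self ht)) b (right_mem_Icc.2 hab)

theorem abs_sub_comp_neg_sub_two_mul_deriv_le {g g₁ g₂ g₃ : ℝ → ℝ} {ε M : ℝ} (hε : 0 ≤ ε)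
    (hg : ∀ s ∈ Icc (-ε) ε, HasDerivAt g (g₁ s) s)
    (hg₁ : ∀ s ∈ Icc (-ε) ε, HasDerivAt g₁ (g₂ s) s)
    (hg₂ : ∀ s ∈ Icc (-ε) ε, HasDerivAt g₂ (g₃ s) s)
    (hg₃ : ∀ s ∈ Icc (-ε) ε, |g₃ s| ≤ M) :
    |g ε - g (-ε) - 2 * ε * g₁ 0| ≤ 2 * M * ε ^ 3 := by
  have hM : 0 ≤ M := (abs_nonneg _).trans (hg₃ 0 ⟨by linarith, hε⟩)
  have symm_mem {t : ℝ} (ht : t ∈ Icc 0 ε) : t ∈ Icc (-ε) ε ∧ -t ∈ Icc (-ε) ε :=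
    ⟨⟨by linarith [ht.1], ht.2⟩, ⟨by linarith [ht.2], by linarith [ht.1]⟩⟩
  have odd₂ : ∀ t ∈ Icc 0 ε, |g₂ t - g₂ (-t)| ≤ 2 * M * ε := by
    intro t ht
    have hsub : Icc (-t) t ⊆ Icc (-ε) ε := Icc_subset_Icc (by linarith [ht.2]) ht.2
    calc |g₂ t - g₂ (-t)| ≤ M * (t - -t) :=
          abs_sub_le_mul_of_hasDerivAt (by linarith [ht.1]) (fun s hs => hg₂ s (hsub hs))
            (fun s hs => hg₃ s (hsub hs))
      _ ≤ 2 * M * ε := by nlinarith [ht.2]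
  have even₁ : ∀ t ∈ Icc 0 ε, |g₁ t + g₁ (-t) - 2 * g₁ 0| ≤ 2 * M * ε ^ 2 := by
    intro t ht
    have hsub : Icc 0 t ⊆ Icc 0 ε := Icc_subset_Icc le_rfl ht.2
    calc |g₁ t + g₁ (-t) - 2 * g₁ 0| = |(g₁ t + g₁ (-t)) - (g₁ 0 + g₁ (-0))| := by
          rw [neg_zero, two_mul]
      _ ≤ 2 * M * ε * (t - 0) := by
          refine abs_sub_le_mul_of_hasDerivAt (f := fun s => g₁ s + g₁ (-s)) ht.1
            (fun s hs => ?_) (fun s hs => odd₂ s (hsub hs))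
          obtain ⟨hs, hs'⟩ := symm_mem (hsub hs)
          exact ((hg₁ s hs).fun_add (hg₁ (-s) hs').comp_neg).congr_deriv (sub_eq_add_neg _ _).symm
      _ ≤ 2 * M * ε ^ 2 := by nlinarith [mul_nonneg hM hε, ht.2]
  calc |g ε - g (-ε) - 2 * ε * g₁ 0|
        = |(g ε - g (-ε) - 2 * ε * g₁ 0) - (g 0 - g (-0) - 2 * 0 * g₁ 0)| := by simp
    _ ≤ 2 * M * ε ^ 2 * (ε - 0) := by
        refine abs_sub_le_mul_of_hasDerivAt (f := fun s => g s - g (-s) - 2 * s * g₁ 0) hε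
          (fun s hs => ?_) even₁
        obtain ⟨hs, hs'⟩ := symm_mem hs
        exact (((hg s hs).fun_sub (hg (-s) hs').comp_neg).fun_sub
          (((hasDerivAt_id' s).const_mul 2).mul_const (g₁ 0))).congr_deriv (by ring)
    _ = 2 * M * ε ^ 3 := by ring

theorem continuous_gaussianPDFReal (μ : ℝ) (v : NNReal) : Continuous (gaussianPDFReal μ v) := by
  unfold gaussianPDFReal; fun_prop

theorem stdGaussCDF_eq_integral (x : ℝ) : stdGaussCDF x = ∫ t in Iic x, gaussianPDFReal 0 1 t := by
  rw [stdGaussCDF, gaussianReal_apply_eq_integral 0 one_ne_zero, ENNReal.toReal_ofReal]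
  exact setIntegral_nonneg measurableSet_Iic fun t _ => gaussianPDFReal_nonneg 0 1 t

theorem hasDerivAt_stdGaussCDF (x : ℝ) : HasDerivAt stdGaussCDF (gaussianPDFReal 0 1 x) x := by
  have hint (y : ℝ) := (integrable_gaussianPDFReal 0 1).integrableOn (s := Iic y)
  have hcdf :
      stdGaussCDF = fun y => (∫ t in (0 : ℝ)..y, gaussianPDFReal 0 1 t) + stdGaussCDF 0 := by
    funext y
    rw [stdGaussCDF_eq_integral, stdGaussCDF_eq_integral,
      ← intervalIntegral.integral_Iic_sub_Iic (hint _) (hint _), sub_add_cancel]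
  have hφ := continuous_gaussianPDFReal 0 1
  rw [hcdf]
  exact (intervalIntegral.integral_hasDerivAt_right (hφ.intervalIntegrable 0 x)
    (hφ.stronglyMeasurableAtFilter _ _) hφ.continuousAt).add_const _

theorem one_add_sq_pow_three_mul_exp_le (x : ℝ) : (1 + x ^ 2) ^ 3 * exp (-x ^ 2 / 4) ≤ 1728 := by
  rw [neg_div, exp_neg, ← div_eq_mul_inv, div_le_iff₀ (exp_pos _)]
  have h : 1 + x ^ 2 ≤ 12 * exp (x ^ 2 / 12) := by
    linarith [add_one_le_exp (x ^ 2 / 12)]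
  calc (1 + x ^ 2) ^ 3 ≤ (12 * exp (x ^ 2 / 12)) ^ 3 := by gcongr
    _ = 1728 * exp (x ^ 2 / 4) := by rw [mul_pow, ← exp_nat_mul]; ring_nf

theorem one_le_sqrt_two_pi : 1 ≤ √(2 * π) :=
  one_le_sqrt.2 (by linarith [pi_gt_three])

namespace ScaledStdGaussCDF

noncomputable def invSqrtOneAdd (s : ℝ) : ℝ := (√(1 + s))⁻¹

noncomputable def weight (x s : ℝ) : ℝ := exp (-(x ^ 2 * (1 + s)) / 2)

noncomputable def deriv₁ (x s : ℝ) : ℝ := x / (2 * √(2 * π)) * (weight x s * invSqrtOneAdd s)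

noncomputable def deriv₂ (x s : ℝ) : ℝ :=
  -(x / (4 * √(2 * π))) * (weight x s * (x ^ 2 * invSqrtOneAdd s + invSqrtOneAdd s ^ 3))

noncomputable def deriv₃ (x s : ℝ) : ℝ :=
  x / (8 * √(2 * π)) * (weight x s *
    (x ^ 4 * invSqrtOneAdd s + 2 * x ^ 2 * invSqrtOneAdd s ^ 3 + 3 * invSqrtOneAdd s ^ 5))

theorem hasDerivAt_sqrt_one_add {s : ℝ} (hs : -1 < s) :
    HasDerivAt (fun s => √(1 + s)) (1 / (2 * √(1 + s))) s := by
  simpa using ((hasDerivAt_id' s).const_add 1).sqrt (by linarith)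

theorem hasDerivAt_invSqrtOneAdd {s : ℝ} (hs : -1 < s) :
    HasDerivAt invSqrtOneAdd (-invSqrtOneAdd s ^ 3 / 2) s := by
  have hpos : 0 < √(1 + s) := sqrt_pos.2 (by linarith)
  refine ((hasDerivAt_sqrt_one_add hs).inv hpos.ne').congr_deriv ?_
  rw [invSqrtOneAdd]
  field_simp

theorem hasDerivAt_weight (x s : ℝ) : HasDerivAt (weight x) (-(x ^ 2) / 2 * weight x s) s := by
  have h : HasDerivAt (fun s => -(x ^ 2 * (1 + s)) / 2) (-(x ^ 2) / 2) s := by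
    simpa using (((hasDerivAt_id s).const_add 1).const_mul (x ^ 2)).neg.div_const 2
  exact h.exp.congr_deriv (mul_comm _ _)

theorem hasDerivAt_stdGaussCDF_mul_sqrt (x : ℝ) {s : ℝ} (hs : -1 < s) :
    HasDerivAt (fun s => stdGaussCDF (x * √(1 + s))) (deriv₁ x s) s := by
  refine ((hasDerivAt_stdGaussCDF _).comp s
    ((hasDerivAt_sqrt_one_add hs).const_mul x)).congr_deriv ?_
  have hpos : 0 < √(1 + s) := sqrt_pos.2 (by linarith)
  have hsq : (x * √(1 + s)) ^ 2 = x ^ 2 * (1 + s) := by rw [mul_pow, sq_sqrt (by linarith)]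
  simp only [gaussianPDFReal, deriv₁, weight, invSqrtOneAdd, NNReal.coe_one, mul_one, sub_zero, hsq]
  field_simp

theorem hasDerivAt_deriv₁ (x : ℝ) {s : ℝ} (hs : -1 < s) :
    HasDerivAt (deriv₁ x) (deriv₂ x s) s :=
  (((hasDerivAt_weight x s).mul (hasDerivAt_invSqrtOneAdd hs)).const_mul _).congr_deriv
    (by rw [deriv₂]; ring)

theorem hasDerivAt_deriv₂ (x : ℝ) {s : ℝ} (hs : -1 < s) :
    HasDerivAt (deriv₂ x) (deriv₃ x s) s := by
  have hQ := hasDerivAt_invSqrtOneAdd hs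
  refine (((hasDerivAt_weight x s).mul ((hQ.const_mul (x ^ 2)).fun_add (hQ.fun_pow 3))).const_mul
    _).congr_deriv ?_
  rw [deriv₃]; push_cast; ring

theorem abs_deriv₃_le (x : ℝ) {s : ℝ} (hs : -(1 / 2) ≤ s) : |deriv₃ x s| ≤ 20736 := by
  rw [deriv₃]
  set Q := invSqrtOneAdd s with hQdef
  set T := x ^ 4 * Q + 2 * x ^ 2 * Q ^ 3 + 3 * Q ^ 5
  have hQ : 0 < Q := inv_pos.2 (sqrt_pos.2 (by linarith))
  have hQ2 : Q ≤ 2 := by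
    have : 1 / 2 ≤ √(1 + s) := by
      nlinarith [sq_sqrt (show 0 ≤ 1 + s by linarith), sqrt_nonneg (1 + s)]
    rw [hQdef, invSqrtOneAdd, inv_le_comm₀ (by linarith) two_pos]
    linarith
  have hT : 0 ≤ T := by positivity
  have hT2 : T ≤ 96 * (1 + x ^ 2) ^ 2 := by
    have : Q ^ 3 ≤ 8 := by nlinarith [pow_le_pow_left₀ hQ.le hQ2 3]
    have : Q ^ 5 ≤ 32 := by nlinarith [pow_le_pow_left₀ hQ.le hQ2 5]
    nlinarith [pow_nonneg (sq_nonneg x) 2, sq_nonneg x]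
  have hW0 : 0 < weight x s := exp_pos _
  have hW : weight x s ≤ exp (-x ^ 2 / 4) := exp_le_exp.2 (by nlinarith [sq_nonneg x])
  have hx : |x| ≤ 1 + x ^ 2 := by nlinarith [sq_abs x, abs_nonneg x]
  have h8 : 8 ≤ 8 * √(2 * π) := by linarith [one_le_sqrt_two_pi]
  calc |x / (8 * √(2 * π)) * (weight x s * T)| = |x| * T * weight x s / (8 * √(2 * π)) := by
        rw [abs_mul, abs_div, abs_of_pos (by positivity : 0 < 8 * √(2 * π)),
          abs_of_nonneg (mul_nonneg hW0.le hT)]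
        ring
    _ ≤ (1 + x ^ 2) * (96 * (1 + x ^ 2) ^ 2) * exp (-x ^ 2 / 4) / 8 := by
        gcongr
    _ = 12 * ((1 + x ^ 2) ^ 3 * exp (-x ^ 2 / 4)) := by ring
    _ ≤ 20736 := by linarith [one_add_sq_pow_three_mul_exp_le x]

theorem two_mul_deriv₁_zero (x : ℝ) :
    2 * deriv₁ x 0 = x * exp (-x ^ 2 / 2) / √(2 * π) := by
  simp only [deriv₁, weight, invSqrtOneAdd, add_zero, sqrt_one, inv_one, mul_one, neg_div]
  field_simp

end ScaledStdGaussCDF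

/-- The cdf of a centered Gaussian with variance `σ²` is `x ↦ Φ(x/σ)`; with
`a = (1+ε)⁻¹` and `b = (1−ε)⁻¹` this gives `Φ_a(x) = Φ(x√(1+ε))` and
`Φ_b(x) = Φ(x√(1−ε))`. -/
theorem gaussian_cdf_variance_perturbation :
    ∃ C : ℝ, 0 < C ∧ ∃ ε₀ : ℝ, 0 < ε₀ ∧ ε₀ < 1 ∧
      ∀ ε : ℝ, 0 < ε → ε < ε₀ → ∀ x : ℝ,
        |stdGaussCDF (x * Real.sqrt (1 + ε)) - stdGaussCDF (x * Real.sqrt (1 - ε))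
          - ε * (x * Real.exp (-x ^ 2 / 2) / Real.sqrt (2 * π))| ≤ C * ε ^ 3 := by
  refine ⟨2 * 20736, by norm_num, 1 / 2, by norm_num, by norm_num, fun ε hε hε₀ x => ?_⟩
  have hhalf (s : ℝ) (hs : s ∈ Icc (-ε) ε) : -(1 / 2) ≤ s := by linarith [hs.1]
  have key := abs_sub_comp_neg_sub_two_mul_deriv_le hε.le
    (fun s hs => ScaledStdGaussCDF.hasDerivAt_stdGaussCDF_mul_sqrt x (by linarith [hhalf s hs]))
    (fun s hs => ScaledStdGaussCDF.hasDerivAt_deriv₁ x (by linarith [hhalf s hs]))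
    (fun s hs => ScaledStdGaussCDF.hasDerivAt_deriv₂ x (by linarith [hhalf s hs]))
    (fun s hs => ScaledStdGaussCDF.abs_deriv₃_le x (hhalf s hs))
  rwa [← sub_eq_add_neg, mul_assoc, mul_left_comm, ScaledStdGaussCDF.two_mul_deriv₁_zero] at key
end

section
/- Let X be a real random variable whose law is purely atomic (X takes values in a countable set almost surely) and non-lattice (there exist no reals a and h > 0 with P(X ∈ a + hℤ) = 1), with characteristic function f(t) = E[e^{itX}]. Then for every η > 0 there exists a function λ on the positive integers with λ(k) → ∞ as k → ∞ such that √k · ∫_{η}^{λ(k)} |f(t)|^k / t dt → 0 as k → ∞. -/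
/-!
If `|f(t)| = 1` for some `t ≠ 0`, then `e^{itX}` has an expectation of norm equal to its a.s. bound,
so by strict convexity of `ℂ` it is a.s. constant and `X` lives on a lattice `x₀ + (2π/t)ℤ`.
Hence for a non-lattice law `|f| ≤ c < 1` on every compact `[η, M]`, and
`√k ∫_η^M |f(t)|^k / t dt ≤ k c^k (M - η) / η → 0`. A diagonal choice of `M = λ(k)` growing slowly
enough keeps the convergence.
-/

open MeasureTheory ProbabilityTheory Filter Real Set

/-- Characteristic function of a measure on `ℝ`. -/
noncomputable def charFn (μ : Measure ℝ) (t : ℝ) : ℂ :=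
  ∫ x, Complex.exp (Complex.I * (t * x)) ∂μ

/-- A purely atomic (discrete) law: the variable takes values in a countable set a.s. -/
def IsPurelyAtomic (μ : Measure ℝ) : Prop :=
  ∃ S : Set ℝ, S.Countable ∧ μ S = 1

/-- A non-lattice law: no `a` and `h > 0` with `P(X ∈ a + hℤ) = 1`. -/
def IsNonLattice (μ : Measure ℝ) : Prop :=
  ¬ ∃ a h : ℝ, 0 < h ∧ μ {x : ℝ | ∃ z : ℤ, x = a + h * z} = 1

open scoped Topology

open Complex in
lemma exists_int_eq_add_of_cexp_mul_I_eq {t x₀ x : ℝ} (ht : t ≠ 0)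
    (h : cexp (t * x * I) = cexp (t * x₀ * I)) : ∃ z : ℤ, x = x₀ + 2 * π / t * z := by
  obtain ⟨z, hz⟩ := exp_eq_exp_iff_exists_int.mp h
  refine ⟨z, ?_⟩
  have htx : t * x = t * x₀ + z * (2 * π) := by simpa [mul_assoc] using congrArg im hz
  field_simp
  linarith

lemma norm_charFun_lt_one_of_pos {μ : Measure ℝ} [IsProbabilityMeasure μ]
    (hμ : IsNonLattice μ) {t : ℝ} (ht : 0 < t) : ‖charFun μ t‖ < 1 := by
  have h_le : ∀ᵐ x : ℝ ∂μ, ‖Complex.exp (t * x * Complex.I)‖ ≤ 1 := ae_of_all _ fun x => by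
    rw [← Complex.ofReal_mul, Complex.norm_exp_ofReal_mul_I]
  rcases ae_eq_const_or_norm_integral_lt_of_norm_le_const h_le with hconst | hlt
  · obtain ⟨x₀, hx₀⟩ := hconst.exists
    refine absurd ⟨x₀, 2 * π / t, by positivity, le_antisymm prob_le_one ?_⟩ hμ
    rw [← measure_univ (μ := μ)]
    refine measure_mono_ae ?_
    filter_upwards [hconst] with x hx _
    exact exists_int_eq_add_of_cexp_mul_I_eq ht.ne' (hx.trans hx₀.symm)
  · simpa [charFun_apply_real] using hlt

lemma norm_charFun_lt_one {μ : Measure ℝ} [IsProbabilityMeasure μ]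
    (hμ : IsNonLattice μ) {t : ℝ} (ht : t ≠ 0) : ‖charFun μ t‖ < 1 := by
  rcases ht.lt_or_gt with hneg | hpos
  · simpa using norm_charFun_lt_one_of_pos hμ (neg_pos.mpr hneg)
  · exact norm_charFun_lt_one_of_pos hμ hpos

lemma charFn_eq_charFun (μ : Measure ℝ) : charFn μ = charFun μ := by
  ext t
  simp only [charFn, charFun_apply_real, mul_comm Complex.I]

lemma tendsto_sqrt_mul_integral_norm_pow_div {E : Type*} [NormedAddCommGroup E] {f : ℝ → E}
    {a b : ℝ} (ha : 0 < a) (hab : a ≤ b) (hf : ContinuousOn f (Icc a b))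
    (hf1 : ∀ t ∈ Icc a b, ‖f t‖ < 1) :
    Tendsto (fun k : ℕ => √k * ∫ t in a..b, ‖f t‖ ^ k / t) atTop (𝓝 0) := by
  obtain ⟨t₀, ht₀, hmax⟩ := isCompact_Icc.exists_isMaxOn (nonempty_Icc.mpr hab) hf.norm
  set c := ‖f t₀‖
  have hbound (k : ℕ) : ‖√k * ∫ t in a..b, ‖f t‖ ^ k / t‖ ≤ (b - a) / a * (k * c ^ k) := by
    have hint : ‖∫ t in a..b, ‖f t‖ ^ k / t‖ ≤ c ^ k / a * |b - a| := by
      refine intervalIntegral.norm_integral_le_of_norm_le_const fun t ht => ?_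
      rw [uIoc_of_le hab] at ht
      have ht' : t ∈ Icc a b := Ioc_subset_Icc_self ht
      rw [norm_div, norm_pow, norm_norm, Real.norm_of_nonneg (ha.trans ht.1).le]
      exact div_le_div₀ (by positivity) (pow_le_pow_left₀ (norm_nonneg _) (hmax ht') k) ha ht.1.le
    calc ‖√k * ∫ t in a..b, ‖f t‖ ^ k / t‖
        ≤ k * (c ^ k / a * |b - a|) := by
          rw [norm_mul, Real.norm_of_nonneg (sqrt_nonneg _)]
          have hsqrt : √(k : ℝ) ≤ k := sqrt_le_self_iff.mpr (by rcases k with _ | k <;> simp)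
          exact mul_le_mul hsqrt hint (norm_nonneg _) k.cast_nonneg
      _ = (b - a) / a * (k * c ^ k) := by
          rw [abs_of_nonneg (sub_nonneg.mpr hab)]; ring
  refine squeeze_zero_norm hbound ?_
  simpa using (tendsto_self_mul_const_pow_of_lt_one (norm_nonneg _) (hf1 t₀ ht₀)).const_mul
    ((b - a) / a)

lemma exists_tendsto_atTop_diagonal {α : Type*} [PseudoMetricSpace α] {F : ℕ → ℕ → α} {y : α}
    (hF : ∀ m, Tendsto (F · m) atTop (𝓝 y)) :
    ∃ φ : ℕ → ℕ, Tendsto φ atTop atTop ∧ Tendsto (fun k => F k (φ k)) atTop (𝓝 y) := by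
  classical
  -- `φ k` is the largest `m ≤ k` at which `F k m` is already `1 / (m + 1)`-close to `y`.
  set P : ℕ → ℕ → Prop := fun k m => dist (F k m) y ≤ 1 / (m + 1)
  have hP (m : ℕ) : ∀ᶠ k in atTop, P k m :=
    (tendsto_iff_dist_tendsto_zero.mp (hF m)).eventually (eventually_le_nhds (by positivity))
  set φ : ℕ → ℕ := fun k => Nat.findGreatest (P k) k
  have hφ : Tendsto φ atTop atTop := by
    refine tendsto_atTop_atTop.mpr fun b => ?_
    obtain ⟨N, hN⟩ := eventually_atTop.mp (hP b)
    exact ⟨max N b, fun k hk =>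
      Nat.le_findGreatest (le_of_max_le_right hk) (hN k (le_of_max_le_left hk))⟩
  have hPφ : ∀ᶠ k in atTop, P k (φ k) := by
    filter_upwards [hP 0] with k hk using Nat.findGreatest_spec k.zero_le hk
  refine ⟨φ, hφ, tendsto_iff_dist_tendsto_zero.mpr ?_⟩
  exact squeeze_zero' (.of_forall fun _ => dist_nonneg) hPφ
    (tendsto_one_div_add_atTop_nhds_zero_nat.comp hφ)

theorem esseen_nonlattice_discrete_general
    (μ : Measure ℝ) [IsProbabilityMeasure μ]
    (hnonlattice : IsNonLattice μ) :
    ∀ η : ℝ, 0 < η →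
      ∃ lam : ℕ → ℝ, Tendsto lam atTop atTop ∧
        Tendsto (fun k : ℕ => Real.sqrt k * ∫ t in η..(lam k), ‖charFn μ t‖ ^ k / t)
          atTop (nhds 0) := by
  intro η hη
  have h_fixed (m : ℕ) :
      Tendsto (fun k : ℕ => √k * ∫ t in η..(η + m), ‖charFn μ t‖ ^ k / t) atTop (𝓝 0) := by
    rw [charFn_eq_charFun]
    exact tendsto_sqrt_mul_integral_norm_pow_div hη (le_add_of_nonneg_right m.cast_nonneg)
      continuous_charFun.continuousOn
      fun t ht => norm_charFun_lt_one hnonlattice (hη.trans_le ht.1).ne'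
  obtain ⟨φ, hφ, h_diag⟩ := exists_tendsto_atTop_diagonal h_fixed
  exact ⟨fun k => η + φ k, tendsto_atTop_add_const_left _ _ (tendsto_natCast_atTop_atTop.comp hφ),
    h_diag⟩

/-- Esseen's lemma for non-lattice discrete laws:
`∫_η^{λ(k)} |f(t)|^k / t dt = o(k^{-1/2})`. -/
theorem esseen_nonlattice_discrete
    (μ : Measure ℝ) [IsProbabilityMeasure μ]
    (hatomic : IsPurelyAtomic μ) (hnonlattice : IsNonLattice μ) :
    ∀ η : ℝ, 0 < η →
      ∃ lam : ℕ → ℝ, Tendsto lam atTop atTop ∧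
        Tendsto (fun k : ℕ => Real.sqrt k * ∫ t in η..(lam k), ‖charFn μ t‖ ^ k / t)
          atTop (nhds 0) :=
  esseen_nonlattice_discrete_general μ hnonlattice
end
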